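/- Let (Ω,Σ,P) be a probability space, let K be a convex set of nonnegative random variables that is bounded in L^1(P), and let S be a countable subset of K. Assume the relative L^0(P)-topology on K is locally convex at every point of S, i.e., for every X ∈ S, every forward convex combination of any sequence in K that converges to X in P-probability also converges to X in P-probability. Then the relative L^0(P)-topology on K is uniformly locally convex-solid on S. -/

import Mathlib

/-!
Enumerate `S = {X₀, X₁, …}`. Local convexity at `Xₙ` makes convex combinations of points of `K`
that are `δ`-close to `Xₙ` stay close to `Xₙ`: otherwise a diagonal enumeration of bad convex
combinations yields a sequence of `K` tending to `Xₙ` with a forward convex combination that does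
not. An element `Y` of the solid hull of `{Z - Xₙ : Z ∈ K, d(Z, Xₙ) < δ}` satisfies
`|Y| ≤ |Z - Xₙ| = (Z - Xₙ) + 2 (Xₙ - Z)⁺`, so a convex combination of such `Y` is dominated by
the distance of a convex combination of the `Z` to `Xₙ` plus twice a convex combination of
functions in the order interval `[0, Xₙ]` which are small in probability; the latter is small
because `Xₙ` is a.s. finite, whence `|g| ≤ min (|g|, 1) (1 + Xₙ)` for such `g`. Choosing the
radius `δₙ` for the error `ε 2⁻ⁿ / 4`, the set `W` is the convex hull of the union of these solid
hulls: it is solid, and as `d(·, 0)` is subadditive and decreases under scaling by `[0, 1]`, every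
element of `W` has `d(·, 0) ≤ ∑ ε 2⁻ⁿ / 4 < ε`.
-/

open MeasureTheory Filter Set ProbabilityTheory

noncomputable section

namespace Paper

variable {Ω : Type*} [MeasurableSpace Ω]

/-- The metric `d(X,Y) = E_P[min(|X - Y|, 1)]` metrizing convergence in `P`-probability. -/
def probDist (P : Measure Ω) (X Y : Ω → ℝ) : ℝ :=
  ∫ ω, min |X ω - Y ω| 1 ∂P

/-- `Q` is a probability measure equivalent to `P` (mutually absolutely continuous). -/
def EquivProb (P Q : Measure Ω) : Prop :=
  IsProbabilityMeasure Q ∧ Q ≪ P ∧ P ≪ Q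

/-- `K` is a set of `P`-integrable random variables bounded in `L¹(P)`. -/
def BddL1 (P : Measure Ω) (K : Set (Ω → ℝ)) : Prop :=
  (∀ X ∈ K, Integrable X P) ∧ ∃ C : ℝ, ∀ X ∈ K, (∫ ω, |X ω| ∂P) ≤ C

/-- `K` is `Q`-uniformly integrable: all members are `Q`-integrable and
`sup_{X ∈ K} E_Q[|X| · 1_{|X| > c}] → 0` as `c → ∞`. -/
def UIset (Q : Measure Ω) (K : Set (Ω → ℝ)) : Prop :=
  (∀ X ∈ K, Integrable X Q) ∧
  ∀ ε : ℝ, 0 < ε → ∃ c : ℝ, ∀ X ∈ K, (∫ ω in {ω | c < |X ω|}, |X ω| ∂Q) < ε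

/-- The sequence `Xs` is Cauchy in `P`-probability. -/
def CauchyInProb (P : Measure Ω) (Xs : ℕ → Ω → ℝ) : Prop :=
  ∀ ε : ℝ, 0 < ε →
    Tendsto (fun p : ℕ × ℕ => P {ω | ε ≤ |Xs p.1 ω - Xs p.2 ω|}) atTop (nhds 0)

/-- The (sequential) closure of `K` in the topology of convergence in `P`-probability. -/
def probClosure (P : Measure Ω) (K : Set (Ω → ℝ)) : Set (Ω → ℝ) :=
  {X | ∃ Xs : ℕ → Ω → ℝ, (∀ n, Xs n ∈ K) ∧ TendstoInMeasure P Xs atTop X}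

/-- A set `W` of random variables is solid: if `X ∈ W` and `|Y| ≤ |X|` a.s. then `Y ∈ W`. -/
def SolidSet (P : Measure Ω) (W : Set (Ω → ℝ)) : Prop :=
  ∀ X ∈ W, ∀ Y : Ω → ℝ, AEStronglyMeasurable Y P →
    (∀ᵐ ω ∂P, |Y ω| ≤ |X ω|) → Y ∈ W

/-- The solid hull of a set `A` of random variables. -/
def solidHull (P : Measure Ω) (A : Set (Ω → ℝ)) : Set (Ω → ℝ) :=
  {Y | AEStronglyMeasurable Y P ∧ ∃ X ∈ A, ∀ᵐ ω ∂P, |Y ω| ≤ |X ω|}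

/-- The relative `L⁰(P)`-topology on `K` is uniformly locally convex-solid on `S`:
for every `ε > 0` there is a convex solid set `W` of integrable random variables contained in the
`ε`-ball around `0` such that, for each `X ∈ S`, `(X + W) ∩ K` contains a `d`-ball of `K`
around `X`. -/
def UnifLCS (P : Measure Ω) (K S : Set (Ω → ℝ)) : Prop :=
  ∀ ε : ℝ, 0 < ε → ∃ W : Set (Ω → ℝ),
    (∀ Z ∈ W, Integrable Z P) ∧ Convex ℝ W ∧ SolidSet P W ∧
    (∀ Z ∈ W, probDist P Z 0 < ε) ∧
    ∀ X ∈ S, ∃ δ : ℝ, 0 < δ ∧ ∀ Z ∈ K, probDist P Z X < δ → Z - X ∈ W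

/-- The `L⁰(Q)`- and `L¹(Q)`-topologies agree on `K`: a sequence in `K` converges in
`P`-probability to a member of `K` iff it converges in `L¹(Q)`-norm. -/
def TopAgree (P Q : Measure Ω) (K : Set (Ω → ℝ)) : Prop :=
  ∀ (Xs : ℕ → Ω → ℝ) (X : Ω → ℝ), (∀ n, Xs n ∈ K) → X ∈ K →
    (TendstoInMeasure P Xs atTop X ↔
      Tendsto (fun n => ∫⁻ ω, ENNReal.ofReal |Xs n ω - X ω| ∂Q) atTop (nhds 0))

/-- `W` is a forward convex combination of the sequence `Z`. -/
def IsFCC (Z : ℕ → Ω → ℝ) (W : ℕ → Ω → ℝ) : Prop :=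
  ∀ k, W k ∈ convexHull ℝ (Z '' {n | k ≤ n})

/-- The relative `L⁰(P)`-topology on `K` is locally convex at `X` (forward convex combination
formulation): every FCC of a sequence in `K` converging to `X` in probability also converges
to `X` in probability. -/
def LocConvexAt (P : Measure Ω) (K : Set (Ω → ℝ)) (X : Ω → ℝ) : Prop :=
  ∀ Xs : ℕ → Ω → ℝ, (∀ n, Xs n ∈ K) → TendstoInMeasure P Xs atTop X →
    ∀ W : ℕ → Ω → ℝ, IsFCC Xs W → TendstoInMeasure P W atTop X

/-- The set `L = {Σ_k a_k R_k : Σ_k |a_k| ≤ 1}` (with pointwise a.e. absolutely convergent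
series, which also converge in `L¹(P)`). -/
def Lset (R : ℕ → Ω → ℝ) : Set (Ω → ℝ) :=
  {G | ∃ a : ℕ → ℝ, Summable (fun k => |a k|) ∧ (∑' k, |a k|) ≤ 1 ∧
    G = fun ω => ∑' k, a k * R k ω}

/-- The standard Cauchy distribution on `ℝ`. -/
def cauchyLaw : Measure ℝ :=
  MeasureTheory.volume.withDensity (fun t => ENNReal.ofReal (1 / (Real.pi * (1 + t ^ 2))))

/-- Local convexity of the relative topology on `A ⊆ E` at a point `x ∈ A`, in a topological
vector space. -/
def LocConvexAtTVS {E : Type*} [AddCommGroup E] [Module ℝ E] [TopologicalSpace E]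
    (A : Set E) (x : E) : Prop :=
  ∀ V ∈ nhds (0 : E), ∃ U ∈ nhds (0 : E), ∃ C : Set E,
    Convex ℝ C ∧ ((fun u => x + u) '' U) ∩ A ⊆ C ∧ C ⊆ ((fun v => x + v) '' V) ∩ A

open Topology

section ProbDist

variable {P : Measure Ω} [IsFiniteMeasure P]

lemma integrable_min_abs_one {f : Ω → ℝ} (hf : AEStronglyMeasurable f P) :
    Integrable (fun ω => min |f ω| 1) P :=
  Integrable.of_bound (by fun_prop) 1 <| ae_of_all _ fun ω => by
    rw [Real.norm_eq_abs, abs_of_nonneg (by positivity)]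
    exact min_le_right _ _

omit [IsFiniteMeasure P] in
lemma probDist_nonneg {f g : Ω → ℝ} : 0 ≤ probDist P f g :=
  integral_nonneg fun ω => by positivity

omit [IsFiniteMeasure P] in
lemma probDist_sub_zero (f g : Ω → ℝ) : probDist P (f - g) 0 = probDist P f g := by
  simp [probDist]

lemma probDist_zero_mono {f g : Ω → ℝ} (hf : AEStronglyMeasurable f P)
    (hg : AEStronglyMeasurable g P) (h : ∀ᵐ ω ∂P, |f ω| ≤ |g ω|) :
    probDist P f 0 ≤ probDist P g 0 := by
  simp only [probDist, Pi.zero_apply, sub_zero]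
  exact integral_mono_ae (integrable_min_abs_one hf) (integrable_min_abs_one hg)
    (h.mono fun ω hω => min_le_min_right 1 hω)

lemma min_abs_add_le_add_min_abs (a b : ℝ) : min |a + b| 1 ≤ min |a| 1 + min |b| 1 := by
  rcases le_total 1 |a| with ha | ha
  · rw [min_eq_right ha]; linarith [min_le_right |a + b| 1, le_min (abs_nonneg b) zero_le_one]
  rcases le_total 1 |b| with hb | hb
  · rw [min_eq_right hb]; linarith [min_le_right |a + b| 1, le_min (abs_nonneg a) zero_le_one]
  rw [min_eq_left ha, min_eq_left hb]
  exact (min_le_left _ _).trans (abs_add_le a b)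

lemma probDist_add_zero_le {f g : Ω → ℝ} (hf : AEStronglyMeasurable f P)
    (hg : AEStronglyMeasurable g P) :
    probDist P (f + g) 0 ≤ probDist P f 0 + probDist P g 0 := by
  simp only [probDist, Pi.zero_apply, sub_zero, Pi.add_apply]
  rw [← integral_add (integrable_min_abs_one hf) (integrable_min_abs_one hg)]
  exact integral_mono (integrable_min_abs_one (hf.add hg))
    ((integrable_min_abs_one hf).add (integrable_min_abs_one hg))
    fun ω => min_abs_add_le_add_min_abs (f ω) (g ω)

lemma probDist_sum_zero_le {ι : Type*} (T : Finset ι) {f : ι → Ω → ℝ}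
    (hf : ∀ i ∈ T, AEStronglyMeasurable (f i) P) :
    probDist P (∑ i ∈ T, f i) 0 ≤ ∑ i ∈ T, probDist P (f i) 0 := by
  classical
  induction T using Finset.induction_on with
  | empty => simp [probDist]
  | insert i T hi ih =>
    rw [Finset.sum_insert hi, Finset.sum_insert hi]
    have hT : AEStronglyMeasurable (∑ j ∈ T, f j) P :=
      Finset.aestronglyMeasurable_sum T fun j hj => hf j (Finset.mem_insert_of_mem hj)
    exact (probDist_add_zero_le (hf i (Finset.mem_insert_self i T)) hT).trans
      (add_le_add_right (ih fun j hj => hf j (Finset.mem_insert_of_mem hj)) _)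

lemma probDist_smul_zero_le {f : Ω → ℝ} (hf : AEStronglyMeasurable f P) {c : ℝ} (hc : |c| ≤ 1) :
    probDist P (c • f) 0 ≤ probDist P f 0 :=
  probDist_zero_mono (hf.const_smul c) hf <| ae_of_all _ fun ω => by
    simpa [abs_mul] using mul_le_of_le_one_left (abs_nonneg (f ω)) hc

lemma tendstoInMeasure_iff_tendsto_probDist {f : ℕ → Ω → ℝ} {g : Ω → ℝ}
    (hf : ∀ n, AEStronglyMeasurable (f n) P) (hg : AEStronglyMeasurable g P) :
    TendstoInMeasure P f atTop g ↔ Tendsto (fun n => probDist P (f n) g) atTop (𝓝 0) := by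
  constructor
  · refine fun h => tendsto_of_subseq_tendsto fun ns hns => ?_
    obtain ⟨ms, -, hae⟩ := (h.comp hns).exists_seq_tendsto_ae
    have := tendsto_integral_of_dominated_convergence (f := fun _ => (0 : ℝ)) (fun _ => 1)
      (fun n => (integrable_min_abs_one ((hf (ns (ms n))).sub hg)).1) (integrable_const 1)
      (fun n => ae_of_all _ fun ω => by
        rw [Real.norm_eq_abs, abs_of_nonneg (by positivity)]; exact min_le_right _ _)
      (hae.mono fun ω hω => by
        simpa using (hω.sub_const (g ω)).abs.min (tendsto_const_nhds (x := (1 : ℝ))))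
    exact ⟨ms, by simpa [probDist] using this⟩
  · intro h
    rw [tendstoInMeasure_iff_measureReal_dist]
    intro ε hε
    set c := min ε 1
    have hc : 0 < c := lt_min hε one_pos
    have markov : ∀ n, P.real {ω | ε ≤ dist (f n ω) (g ω)} ≤ probDist P (f n) g / c := fun n => by
      rw [le_div_iff₀ hc, mul_comm]
      refine le_trans ?_ (mul_meas_ge_le_integral_of_nonneg (ae_of_all _ fun ω => by positivity)
        (integrable_min_abs_one ((hf n).sub hg)) c)
      refine mul_le_mul_of_nonneg_left (measureReal_mono fun ω hω => ?_) hc.le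
      exact le_min ((min_le_left _ _).trans (by simpa [Real.dist_eq] using hω)) (min_le_right _ _)
    exact squeeze_zero (fun n => measureReal_nonneg) markov (by simpa using h.div_const c)

end ProbDist

lemma exists_seq_mem_forall_subset_image {α : Type*} (t : ℕ → Finset α)
    (ht : ∀ m, (t m).Nonempty) :
    ∃ (z : ℕ → α) (level : ℕ → ℕ), Tendsto level atTop atTop ∧ (∀ k, z k ∈ t (level k)) ∧
      ∀ m, ↑(t m) ⊆ z '' {k | m ≤ k} := by
  classical
  -- `k = pair i m` enumerates the `i`-th element of `t m`; other indices `k` take a point of `t k`.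
  let L : ℕ → List α := fun m => (t m).toList
  let z : ℕ → α := fun k =>
    if h : k.unpair.1 < (L k.unpair.2).length then (L k.unpair.2)[k.unpair.1] else (ht k).choose
  let level : ℕ → ℕ := fun k => if k.unpair.1 < (L k.unpair.2).length then k.unpair.2 else k
  refine ⟨z, level, ?_, fun k => ?_, fun m y hy => ?_⟩
  · rw [tendsto_atTop, ← Nat.cofinite_eq_atTop]
    intro M
    rw [eventually_cofinite]
    refine ((finite_Iio M).union ((finite_Iio M).biUnion fun m _ =>
      (finite_Iio (L m).length).image fun i => Nat.pair i m)).subset fun k hk => ?_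
    simp only [mem_ofPred_eq, not_le, level] at hk
    split_ifs at hk with h
    · refine Or.inr (mem_biUnion hk ⟨k.unpair.1, h, Nat.pair_unpair k⟩)
    · exact Or.inl hk
  · simp only [z, level]
    split_ifs with h
    · exact Finset.mem_toList.1 (List.getElem_mem h)
    · exact (ht k).choose_spec
  · obtain ⟨i, hi, rfl⟩ := List.mem_iff_getElem.1 (Finset.mem_toList.2 hy)
    refine ⟨Nat.pair i m, Nat.right_le_pair i m, ?_⟩
    simp only [z, L, Nat.unpair_pair, dif_pos hi]

lemma LocConvexAt.exists_forall_mem_convexHull_probDist_le {P : Measure Ω} [IsFiniteMeasure P]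
    {K : Set (Ω → ℝ)} {X : Ω → ℝ} (hK : Convex ℝ K)
    (hKm : ∀ Y ∈ K, AEStronglyMeasurable Y P) (hXm : AEStronglyMeasurable X P)
    (hX : LocConvexAt P K X) {η : ℝ} (hη : 0 < η) :
    ∃ δ > 0, ∀ V ∈ convexHull ℝ {Z | Z ∈ K ∧ probDist P Z X < δ}, probDist P V X ≤ η := by
  by_contra! hcon
  choose V hV hVη using fun m : ℕ => hcon (1 / (m + 1)) Nat.one_div_pos_of_nat
  have hVK : ∀ m, V m ∈ K := fun m => convexHull_min (fun Z hZ => hZ.1) hK (hV m)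
  have hV' : ∀ m : ℕ, ∃ t : Finset (Ω → ℝ), ↑t ⊆ {Z | Z ∈ K ∧ probDist P Z X < 1 / (m + 1)} ∧
      V m ∈ convexHull ℝ ↑t := fun m => by
    have := hV m
    rw [convexHull_eq_union_convexHull_finite_subsets] at this
    simpa only [mem_iUnion, exists_prop] using this
  choose t ht hVt using hV'
  obtain ⟨z, level, hlevel, hz, htz⟩ := exists_seq_mem_forall_subset_image t fun m =>
    Finset.coe_nonempty.1 (convexHull_nonempty_iff.1 ⟨V m, hVt m⟩)
  have hzK : ∀ k, z k ∈ K := fun k => (ht _ (hz k)).1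
  have hzX : TendstoInMeasure P z atTop X := by
    refine (tendstoInMeasure_iff_tendsto_probDist (fun k => hKm _ (hzK k)) hXm).2 <|
      squeeze_zero (fun k => probDist_nonneg) (fun k => (ht _ (hz k)).2.le) ?_
    exact tendsto_one_div_add_atTop_nhds_zero_nat.comp hlevel
  have hVX := (tendstoInMeasure_iff_tendsto_probDist (fun m => hKm _ (hVK m)) hXm).1 <|
    hX z hzK hzX V fun m => convexHull_mono (htz m) (hVt m)
  obtain ⟨m, hm⟩ := (hVX.eventually (gt_mem_nhds hη)).exists
  exact (hVη m).not_gt hm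

lemma exists_sum_smul_eq_of_mem_convexHull_iUnion {𝕜 E ι : Type*} [Field 𝕜] [LinearOrder 𝕜]
    [IsStrictOrderedRing 𝕜] [AddCommGroup E] [Module 𝕜 E] {A : ι → Set E} {x : E}
    (hx : x ∈ convexHull 𝕜 (⋃ i, A i)) :
    ∃ (T : Finset ι) (u : ι → 𝕜) (y : ι → E), (∀ i ∈ T, 0 ≤ u i) ∧ ∑ i ∈ T, u i = 1 ∧
      (∀ i ∈ T, y i ∈ convexHull 𝕜 (A i)) ∧ ∑ i ∈ T, u i • y i = x := by
  classical
  obtain ⟨κ, _, w, z, hw0, hw1, hz, rfl⟩ := mem_convexHull_iff_exists_fintype.1 hx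
  choose c hc using fun j => mem_iUnion.1 (hz j)
  -- zero weights are discarded so that every fibre of `c` has positive total weight
  set F := Finset.univ.filter fun j => w j ≠ 0
  set fiber : ι → Finset κ := fun i => F.filter fun j => c j = i
  have hmaps : ∀ j ∈ F, c j ∈ F.image c := fun j hj => Finset.mem_image_of_mem c hj
  have hpos : ∀ i ∈ F.image c, 0 < ∑ j ∈ fiber i, w j := fun i hi => by
    obtain ⟨j, hj, rfl⟩ := Finset.mem_image.1 hi
    exact Finset.sum_pos' (fun j _ => hw0 j) ⟨j, Finset.mem_filter.2 ⟨hj, rfl⟩,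
      (hw0 j).lt_of_ne' (Finset.mem_filter.1 hj).2⟩
  refine ⟨F.image c, fun i => ∑ j ∈ fiber i, w j, fun i => (fiber i).centerMass w z,
    fun i hi => (hpos i hi).le, ?_, fun i hi => ?_, ?_⟩
  · rw [Finset.sum_fiberwise_of_maps_to hmaps, Finset.sum_filter_ne_zero, hw1]
  · refine (fiber i).centerMass_mem_convexHull (fun j _ => hw0 j) (hpos i hi) fun j hj => ?_
    exact (Finset.mem_filter.1 hj).2 ▸ hc j
  · calc ∑ i ∈ F.image c, (∑ j ∈ fiber i, w j) • (fiber i).centerMass w z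
        = ∑ i ∈ F.image c, ∑ j ∈ fiber i, w j • z j :=
          Finset.sum_congr rfl fun i hi => by
            rw [Finset.centerMass, smul_smul, mul_inv_cancel₀ (hpos i hi).ne', one_smul]
      _ = ∑ j ∈ F, w j • z j := Finset.sum_fiberwise_of_maps_to hmaps _
      _ = ∑ j, w j • z j := Finset.sum_filter_of_ne fun j _ h => left_ne_zero_of_smul h

section ConvexHull

variable {P : Measure Ω}

lemma aestronglyMeasurable_of_mem_convexHull {A : Set (Ω → ℝ)}
    (hA : ∀ X ∈ A, AEStronglyMeasurable X P) {G : Ω → ℝ} (hG : G ∈ convexHull ℝ A) :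
    AEStronglyMeasurable G P :=
  convexHull_min (t := {f | AEStronglyMeasurable f P}) hA
    (fun _ hf _ hg a b _ _ _ => by exact (hf.const_smul a).add (hg.const_smul b)) hG

lemma integrable_of_mem_convexHull {A : Set (Ω → ℝ)} (hA : ∀ X ∈ A, Integrable X P)
    {G : Ω → ℝ} (hG : G ∈ convexHull ℝ A) : Integrable G P :=
  convexHull_min (t := {f | Integrable f P}) hA
    (fun _ hf _ hg a b _ _ _ => by exact (hf.smul a).add (hg.smul b)) hG

lemma abs_sum_smul_apply_le {α ι : Type*} (T : Finset ι) {w : ι → ℝ} (hw : ∀ i ∈ T, 0 ≤ w i)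
    (f : ι → α → ℝ) (a : α) : |(∑ i ∈ T, w i • f i) a| ≤ ∑ i ∈ T, w i * |f i a| := by
  rw [Finset.sum_apply]
  refine (Finset.abs_sum_le_sum_abs _ _).trans_eq (Finset.sum_congr rfl fun i hi => ?_)
  rw [Pi.smul_apply, smul_eq_mul, abs_mul, abs_of_nonneg (hw i hi)]

lemma solidSet_solidHull (A : Set (Ω → ℝ)) : SolidSet P (solidHull P A) :=
  fun _ ⟨_, X, hX, hYX⟩ _ hY' hY'Y => ⟨hY', X, hX, (hY'Y.and hYX).mono fun _ h => h.1.trans h.2⟩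

lemma integrable_of_mem_solidHull {A : Set (Ω → ℝ)} (hA : ∀ X ∈ A, Integrable X P) {Y : Ω → ℝ}
    (hY : Y ∈ solidHull P A) : Integrable Y P := by
  obtain ⟨hYm, X, hX, hYX⟩ := hY
  exact (hA X hX).mono hYm (hYX.mono fun ω h => by simpa only [Real.norm_eq_abs] using h)

lemma SolidSet.iUnion {ι : Sort*} {A : ι → Set (Ω → ℝ)} (hA : ∀ i, SolidSet P (A i)) :
    SolidSet P (⋃ i, A i) := fun X hX Y hY hYX => by
  obtain ⟨i, hi⟩ := mem_iUnion.1 hX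
  exact mem_iUnion.2 ⟨i, hA i X hi Y hY hYX⟩

lemma SolidSet.convexHull {A : Set (Ω → ℝ)} (hA : SolidSet P A)
    (hAm : ∀ X ∈ A, AEStronglyMeasurable X P) : SolidSet P (convexHull ℝ A) := by
  intro G hG Y hYm hYG
  obtain ⟨ι, _, w, X, hw0, hw1, hX, rfl⟩ := mem_convexHull_iff_exists_fintype.1 hG
  set h : Ω → ℝ := fun ω => ∑ i, w i * |X i ω|
  -- `s i = |X i| / h` where `h ≠ 0` and `s i = 1` where `h = 0` (written with `h / h` rather than
  -- an `if`, to keep it measurable), so that `Y = ∑ i, w i • (Y * s i)`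
  set s : ι → Ω → ℝ := fun i ω => |X i ω| / h ω + (1 - h ω / h ω)
  have hs : ∀ ω, ∑ i, w i * s i ω = 1 := fun ω => by
    simp only [s, mul_add, Finset.sum_add_distrib, ← Finset.sum_mul, hw1, one_mul, mul_div_assoc',
      ← Finset.sum_div]
    ring
  have hYh : ∀ᵐ ω ∂P, |Y ω| ≤ h ω :=
    hYG.mono fun ω hω => hω.trans (abs_sum_smul_apply_le _ (fun i _ => hw0 i) X ω)
  refine mem_convexHull_of_exists_fintype w (fun i => Y * s i) hw0 hw1 (fun i => ?_) ?_
  · have hXm := fun i => (hAm _ (hX i)).aemeasurable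
    refine hA _ (hX i) _ (hYm.mul (by fun_prop : AEMeasurable (s i) P).aestronglyMeasurable)
      (hYh.mono fun ω hω => ?_)
    rcases eq_or_ne (h ω) 0 with h0 | h0
    · simp [abs_nonpos_iff.1 (hω.trans_eq h0)]
    · have hpos : 0 < h ω := ((abs_nonneg _).trans hω).lt_of_ne' h0
      simp only [s, Pi.mul_apply, div_self h0, sub_self, add_zero, abs_mul, abs_div, abs_abs,
        abs_of_pos hpos]
      calc |Y ω| * (|X i ω| / h ω) ≤ h ω * (|X i ω| / h ω) := by gcongr
        _ = |X i ω| := mul_div_cancel₀ _ h0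
  · ext ω
    simp only [Finset.sum_apply, Pi.smul_apply, Pi.mul_apply, smul_eq_mul]
    conv_rhs => rw [← mul_one (Y ω), ← hs ω, Finset.mul_sum]
    exact Finset.sum_congr rfl fun i _ => by ring

lemma exists_abs_le_sum_of_mem_convexHull_solidHull {A : Set (Ω → ℝ)} {G : Ω → ℝ}
    (hG : G ∈ convexHull ℝ (solidHull P A)) :
    ∃ (ι : Type) (_ : Fintype ι) (w : ι → ℝ) (X : ι → Ω → ℝ), (∀ i, 0 ≤ w i) ∧ ∑ i, w i = 1 ∧
      (∀ i, X i ∈ A) ∧ ∀ᵐ ω ∂P, |G ω| ≤ ∑ i, w i * |X i ω| := by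
  obtain ⟨ι, _, w, Y, hw0, hw1, hY, rfl⟩ := mem_convexHull_iff_exists_fintype.1 hG
  choose X hXA hYX using fun i => (hY i).2
  refine ⟨ι, inferInstance, w, X, hw0, hw1, hXA, ?_⟩
  filter_upwards [ae_all_iff.2 hYX] with ω hω
  exact (abs_sum_smul_apply_le _ (fun i _ => hw0 i) Y ω).trans
    (Finset.sum_le_sum fun i _ => mul_le_mul_of_nonneg_left (hω i) (hw0 i))

end ConvexHull

section OrderInterval

variable {P : Measure Ω} [IsFiniteMeasure P]

lemma exists_pos_integral_min_add_lt {X : Ω → ℝ} (hX : AEStronglyMeasurable X P) {η : ℝ}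
    (hη : 0 < η) : ∃ b > 0, ∫ ω, min (b * (1 + |X ω|)) 1 ∂P + b < η := by
  have hint : Tendsto (fun b => ∫ ω, min (b * (1 + |X ω|)) 1 ∂P) (𝓝[>] 0) (𝓝 0) := by
    have := tendsto_integral_filter_of_dominated_convergence (l := 𝓝[>] (0 : ℝ))
      (F := fun b ω => min (b * (1 + |X ω|)) 1) (f := fun _ => 0) (fun _ => 1)
      (Eventually.of_forall fun b => by fun_prop)
      (eventually_mem_nhdsWithin.mono fun b (hb : 0 < b) => ae_of_all _ fun ω => by
        rw [Real.norm_eq_abs, abs_of_nonneg (by positivity)]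
        exact min_le_right _ _)
      (integrable_const 1)
      (ae_of_all _ fun ω => tendsto_nhdsWithin_of_tendsto_nhds <|
        ((continuous_id.mul continuous_const).min continuous_const).tendsto' _ _ (by simp))
    simpa using this
  have hlim : Tendsto (fun b => ∫ ω, min (b * (1 + |X ω|)) 1 ∂P + b) (𝓝[>] 0) (𝓝 0) := by
    simpa using hint.add (tendsto_nhdsWithin_of_tendsto_nhds tendsto_id)
  obtain ⟨b, hbη, hb⟩ := ((hlim.eventually (gt_mem_nhds hη)).and self_mem_nhdsWithin).exists
  exact ⟨b, hb, hbη⟩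

lemma probDist_zero_le_of_abs_le_mul {D U X : Ω → ℝ} (hD : AEStronglyMeasurable D P)
    (hX : AEStronglyMeasurable X P) (hU : Integrable U P) {b : ℝ} (hb : 0 < b)
    (h : ∀ᵐ ω ∂P, 0 ≤ U ω ∧ |D ω| ≤ U ω * (1 + |X ω|)) :
    probDist P D 0 ≤ ∫ ω, min (b * (1 + |X ω|)) 1 ∂P + (∫ ω, U ω ∂P) / b := by
  have hmin : Integrable (fun ω => min (b * (1 + |X ω|)) 1) P :=
    Integrable.of_bound (by fun_prop) 1 <| ae_of_all _ fun ω => by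
      rw [Real.norm_eq_abs, abs_of_nonneg (by positivity)]
      exact min_le_right _ _
  simp only [probDist, Pi.zero_apply, sub_zero]
  rw [← integral_div, ← integral_add hmin (hU.div_const b)]
  refine integral_mono_ae (integrable_min_abs_one hD) (hmin.add (hU.div_const b))
    (h.mono fun ω ⟨hU0, hDU⟩ => ?_)
  rcases le_total (U ω) b with hUb | hUb
  · have : |D ω| ≤ b * (1 + |X ω|) := hDU.trans (by gcongr)
    linarith [min_le_min_right 1 this, div_nonneg hU0 hb.le]
  · linarith [min_le_right |D ω| 1, (one_le_div hb).2 hUb,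
      le_min (by positivity : 0 ≤ b * (1 + |X ω|)) zero_le_one]

lemma exists_forall_mem_convexHull_abs_le_probDist_lt {X : Ω → ℝ}
    (hX : AEStronglyMeasurable X P) {η : ℝ} (hη : 0 < η) :
    ∃ δ > 0, ∀ D ∈ convexHull ℝ
      {g | AEStronglyMeasurable g P ∧ (∀ᵐ ω ∂P, |g ω| ≤ |X ω|) ∧ probDist P g 0 < δ},
      probDist P D 0 < η := by
  obtain ⟨b, hb, hbη⟩ := exists_pos_integral_min_add_lt hX hη
  refine ⟨b ^ 2, by positivity, fun D hD => ?_⟩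
  let C : Set (Ω → ℝ) := {D | AEStronglyMeasurable D P ∧ ∃ U, Integrable U P ∧
    ∫ ω, U ω ∂P ≤ b ^ 2 ∧ ∀ᵐ ω ∂P, 0 ≤ U ω ∧ |D ω| ≤ U ω * (1 + |X ω|)}
  have hC : Convex ℝ C := by
    rintro D₁ ⟨hD₁, U₁, hU₁, hU₁b, h₁⟩ D₂ ⟨hD₂, U₂, hU₂, hU₂b, h₂⟩ s t hs ht hst
    refine ⟨(hD₁.const_smul s).add (hD₂.const_smul t), s • U₁ + t • U₂,
      (hU₁.smul s).add (hU₂.smul t), ?_, ?_⟩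
    · rw [Pi.add_def, integral_add (hU₁.smul s) (hU₂.smul t)]
      simp only [Pi.smul_apply, smul_eq_mul, integral_const_mul]
      nlinarith
    · filter_upwards [h₁, h₂] with ω ⟨h0₁, h₁⟩ ⟨h0₂, h₂⟩
      simp only [Pi.add_apply, Pi.smul_apply, smul_eq_mul]
      refine ⟨by positivity, (abs_add_le _ _).trans ?_⟩
      rw [abs_mul, abs_mul, abs_of_nonneg hs, abs_of_nonneg ht]
      nlinarith [mul_le_mul_of_nonneg_left h₁ hs, mul_le_mul_of_nonneg_left h₂ ht]
  have hgC : ∀ g, AEStronglyMeasurable g P ∧ (∀ᵐ ω ∂P, |g ω| ≤ |X ω|) ∧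
      probDist P g 0 < b ^ 2 → g ∈ C := fun g ⟨hg, hgX, hgb⟩ => by
    refine ⟨hg, fun ω => min |g ω| 1, integrable_min_abs_one hg,
      by simpa [probDist] using hgb.le, hgX.mono fun ω hω => ⟨by positivity, ?_⟩⟩
    show |g ω| ≤ min |g ω| 1 * (1 + |X ω|)
    rcases le_total |g ω| 1 with h1 | h1
    · rw [min_eq_left h1]
      nlinarith [abs_nonneg (g ω), abs_nonneg (X ω)]
    · rw [min_eq_right h1]
      linarith
  obtain ⟨hDm, U, hU, hUb, hDU⟩ := convexHull_min hgC hC hD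
  calc probDist P D 0 ≤ ∫ ω, min (b * (1 + |X ω|)) 1 ∂P + (∫ ω, U ω ∂P) / b :=
        probDist_zero_le_of_abs_le_mul hDm hX hU hb hDU
    _ ≤ ∫ ω, min (b * (1 + |X ω|)) 1 ∂P + b := by
        gcongr
        rw [div_le_iff₀ hb]
        nlinarith
    _ < η := hbη

end OrderInterval

lemma sum_mul_abs_sub_eq {ι : Type*} (T : Finset ι) {w : ι → ℝ} (hw : ∑ i ∈ T, w i = 1)
    (z : ι → ℝ) (x : ℝ) :
    ∑ i ∈ T, w i * |z i - x| = ∑ i ∈ T, w i * z i - x + 2 * ∑ i ∈ T, w i * max (x - z i) 0 := by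
  have h : ∀ i, |z i - x| = z i - x + 2 * max (x - z i) 0 := fun i => by
    rcases le_total x (z i) with hi | hi
    · rw [abs_of_nonneg (sub_nonneg.2 hi), max_eq_right (sub_nonpos.2 hi)]
      ring
    · rw [abs_of_nonpos (sub_nonpos.2 hi), max_eq_left (sub_nonneg.2 hi)]
      ring
  simp only [h, mul_add, mul_sub, Finset.sum_add_distrib, Finset.sum_sub_distrib, ← Finset.sum_mul,
    hw, one_mul, mul_left_comm _ (2 : ℝ), ← Finset.mul_sum]

section Estimates

variable {P : Measure Ω} [IsFiniteMeasure P]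

lemma probDist_max_sub_zero_le {X Z : Ω → ℝ} (hX : AEStronglyMeasurable X P)
    (hZ : AEStronglyMeasurable Z P) :
    probDist P (fun ω => max (X ω - Z ω) 0) 0 ≤ probDist P Z X := by
  rw [← probDist_sub_zero Z X]
  refine probDist_zero_mono ((hX.sub hZ).aemeasurable.max aemeasurable_const).aestronglyMeasurable
    (hZ.sub hX) (ae_of_all _ fun ω => ?_)
  rw [abs_of_nonneg (le_max_right _ _), Pi.sub_apply, abs_sub_comm]
  exact max_le (le_abs_self _) (abs_nonneg _)

lemma LocConvexAt.exists_forall_mem_convexHull_solidHull_probDist_lt {K : Set (Ω → ℝ)}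
    {X : Ω → ℝ} (hK : Convex ℝ K) (hKm : ∀ Y ∈ K, AEStronglyMeasurable Y P)
    (hKpos : ∀ Y ∈ K, 0 ≤ᵐ[P] Y) (hXm : AEStronglyMeasurable X P) (hX : LocConvexAt P K X)
    {η : ℝ} (hη : 0 < η) :
    ∃ δ > 0, ∀ G ∈ convexHull ℝ (solidHull P ((· - X) '' {Z | Z ∈ K ∧ probDist P Z X < δ})),
      probDist P G 0 < η := by
  obtain ⟨δ₁, hδ₁, hV⟩ :=
    hX.exists_forall_mem_convexHull_probDist_le hK hKm hXm (η := η / 3) (by positivity)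
  obtain ⟨δ₂, hδ₂, hD⟩ := exists_forall_mem_convexHull_abs_le_probDist_lt hXm (η := η / 3)
    (by positivity)
  refine ⟨min δ₁ δ₂, lt_min hδ₁ hδ₂, fun G hG => ?_⟩
  obtain ⟨ι, _, w, Y, hw0, hw1, hY, hGY⟩ := exists_abs_le_sum_of_mem_convexHull_solidHull hG
  choose Z hZ hZY using hY
  have hZm : ∀ i, AEStronglyMeasurable (Z i) P := fun i => hKm _ (hZ i).1
  set V := ∑ i, w i • Z i
  set D := ∑ i, w i • fun ω => max (X ω - Z i ω) 0
  have hmax : ∀ i, AEStronglyMeasurable (fun ω => max (X ω - Z i ω) 0) P := fun i =>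
    ((hXm.sub (hZm i)).aemeasurable.max aemeasurable_const).aestronglyMeasurable
  have hDm : AEStronglyMeasurable D P :=
    Finset.aestronglyMeasurable_sum _ fun i _ => (hmax i).const_smul _
  have hVm : AEStronglyMeasurable V P :=
    Finset.aestronglyMeasurable_sum _ fun i _ => (hZm i).const_smul _
  have hVX : probDist P V X ≤ η / 3 := hV V <| mem_convexHull_of_exists_fintype w Z hw0 hw1
    (fun i => ⟨(hZ i).1, (hZ i).2.trans_le (min_le_left _ _)⟩) rfl
  have hD0 : probDist P D 0 < η / 3 := by
    refine hD D <| mem_convexHull_of_exists_fintype w _ hw0 hw1 (fun i => ?_) rfl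
    refine ⟨hmax i, (hKpos _ (hZ i).1).mono fun ω hω => ?_,
      (probDist_max_sub_zero_le hXm (hZm i)).trans_lt ((hZ i).2.trans_le (min_le_right _ _))⟩
    rw [abs_of_nonneg (le_max_right _ _)]
    exact max_le (by linarith [le_abs_self (X ω), show 0 ≤ Z i ω from hω]) (abs_nonneg _)
  have hGVD : ∀ᵐ ω ∂P, |G ω| ≤ |(V - X + D + D) ω| := hGY.mono fun ω hω => by
    refine hω.trans (le_of_eq_of_le ?_ (le_abs_self _))
    simp only [V, D, ← hZY, Pi.add_apply, Pi.sub_apply, Finset.sum_apply, Pi.smul_apply,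
      smul_eq_mul, sum_mul_abs_sub_eq _ hw1]
    ring
  calc probDist P G 0 ≤ probDist P (V - X + D + D) 0 :=
        probDist_zero_mono (aestronglyMeasurable_of_mem_convexHull
          (fun _ hY => hY.1) hG) (((hVm.sub hXm).add hDm).add hDm) hGVD
    _ ≤ probDist P (V - X) 0 + probDist P D 0 + probDist P D 0 :=
        (probDist_add_zero_le ((hVm.sub hXm).add hDm) hDm).trans
          (add_le_add_left (probDist_add_zero_le (hVm.sub hXm) hDm) _)
    _ < η := by rw [probDist_sub_zero]; linarith

lemma probDist_zero_le_tsum_of_mem_convexHull_iUnion {ι : Type*} {A : ι → Set (Ω → ℝ)}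
    (hAm : ∀ i, ∀ X ∈ A i, AEStronglyMeasurable X P) {η : ι → ℝ} (hη0 : ∀ i, 0 ≤ η i)
    (hη : Summable η) (hA : ∀ i, ∀ G ∈ convexHull ℝ (A i), probDist P G 0 ≤ η i) {G : Ω → ℝ}
    (hG : G ∈ convexHull ℝ (⋃ i, A i)) : probDist P G 0 ≤ ∑' i, η i := by
  obtain ⟨T, u, y, hu0, hu1, hy, rfl⟩ := exists_sum_smul_eq_of_mem_convexHull_iUnion hG
  have hym : ∀ i ∈ T, AEStronglyMeasurable (y i) P := fun i hi =>
    aestronglyMeasurable_of_mem_convexHull (hAm i) (hy i hi)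
  have hu : ∀ i ∈ T, |u i| ≤ 1 := fun i hi => by
    rw [abs_of_nonneg (hu0 i hi), ← hu1]
    exact Finset.single_le_sum hu0 hi
  calc probDist P (∑ i ∈ T, u i • y i) 0 ≤ ∑ i ∈ T, probDist P (u i • y i) 0 :=
        probDist_sum_zero_le T fun i hi => (hym i hi).const_smul _
    _ ≤ ∑ i ∈ T, η i := Finset.sum_le_sum fun i hi =>
        (probDist_smul_zero_le (hym i hi) (hu i hi)).trans (hA i _ (hy i hi))
    _ ≤ ∑' i, η i := hη.sum_le_tsum T fun i _ => hη0 i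

end Estimates

/-- Proposition 3.6: for a convex `L¹(P)`-bounded set of nonnegative random variables,
local convexity at each point of a countable subset `S` upgrades to uniform local
convex-solidity on `S`. -/
theorem statement8 (P : Measure Ω) [IsProbabilityMeasure P]
    (K S : Set (Ω → ℝ)) (hKconv : Convex ℝ K) (hKbdd : BddL1 P K)
    (hKpos : ∀ X ∈ K, (0 : Ω → ℝ) ≤ᵐ[P] X)
    (hS : S.Nonempty) (hSsub : S ⊆ K) (hScount : S.Countable)
    (hlc : ∀ X ∈ S, LocConvexAt P K X) :
    UnifLCS P K S := by
  obtain ⟨e, rfl⟩ := hScount.exists_eq_range hS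
  have heK : ∀ n, e n ∈ K := fun n => hSsub (mem_range_self n)
  have hKm : ∀ Y ∈ K, AEStronglyMeasurable Y P := fun Y hY => (hKbdd.1 Y hY).1
  intro ε hε
  set η : ℕ → ℝ := fun n => ε / 4 * (1 / 2) ^ n
  choose δ hδ hδη using fun n =>
    (hlc _ (mem_range_self n)).exists_forall_mem_convexHull_solidHull_probDist_lt hKconv hKm hKpos
      (hKm _ (heK n)) (η := η n) (by positivity)
  set A : ℕ → Set (Ω → ℝ) :=
    fun n => solidHull P ((· - e n) '' {Z | Z ∈ K ∧ probDist P Z (e n) < δ n})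
  have hA : ∀ n, ∀ Y ∈ A n, Integrable Y P := fun n Y => integrable_of_mem_solidHull <| by
    rintro _ ⟨Z, hZ, rfl⟩
    exact (hKbdd.1 Z hZ.1).sub (hKbdd.1 _ (heK n))
  refine ⟨convexHull ℝ (⋃ n, A n), fun G => integrable_of_mem_convexHull fun Y hY => ?_,
    convex_convexHull ℝ _, (SolidSet.iUnion fun n => solidSet_solidHull _).convexHull
      fun Y hY => ?_, fun G hG => ?_, ?_⟩
  · obtain ⟨n, hn⟩ := mem_iUnion.1 hY
    exact hA n Y hn
  · obtain ⟨n, hn⟩ := mem_iUnion.1 hY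
    exact hn.1
  · calc probDist P G 0 ≤ ∑' n, η n :=
          probDist_zero_le_tsum_of_mem_convexHull_iUnion (fun n Y hY => hY.1)
            (fun n => by positivity) (summable_geometric_two.mul_left _)
            (fun n G hG => (hδη n G hG).le) hG
      _ < ε := by simp only [η, tsum_mul_left, tsum_geometric_two]; linarith
  · rintro _ ⟨n, rfl⟩
    refine ⟨δ n, hδ n, fun Z hZK hZ => subset_convexHull ℝ _ (mem_iUnion.2 ⟨n, ?_⟩)⟩
    exact ⟨(hKm Z hZK).sub (hKm _ (heK n)), Z - e n, ⟨Z, ⟨hZK, hZ⟩, rfl⟩,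
      ae_of_all _ fun _ => le_rfl⟩

end Paper
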